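/- If P and Q are irreducible and reversible with respect to π, and P efficiency-dominates Q, then P eigen-dominates Q: writing the eigenvalues of P as λ_1 ≥ … ≥ λ_n and of Q as β_1 ≥ … ≥ β_n (with multiplicity), we have λ_i ≤ β_i for every i. -/

import Mathlib

/-!
For a kernel with a `π`-orthonormal eigenbasis `(v m, λ m)`, the asymptotic variance of `f` is
`∑ m, ⟪f - π f, v m⟫² (1 + λ m) / (1 - λ m)`; the eigenvalue `1` contributes nothing because, by
irreducibility, its eigenvectors are constant. If `β i < λ i`, a dimension count gives `f ≠ 0`
orthogonal to `vQ m` for `m < i` (so `f` is centred, `vQ 0` being constant) and to `vP m` for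
`m > i`. As `x ↦ (1 + x) / (1 - x)` increases on `(-∞, 1)`, the asymptotic variance of `f` is at
least `(1 + λ i) / (1 - λ i) ‖f‖²` under `P` and at most `(1 + β i) / (1 - β i) ‖f‖²` under `Q`,
contradicting efficiency dominance.
-/

open Matrix BigOperators Filter

def IsStochastic {n : ℕ} (P : Matrix (Fin n) (Fin n) ℝ) : Prop :=
  (∀ x y, 0 ≤ P x y) ∧ ∀ x, ∑ y, P x y = 1

def IsReversible {n : ℕ} (π : Fin n → ℝ) (P : Matrix (Fin n) (Fin n) ℝ) : Prop :=
  ∀ x y, π x * P x y = π y * P y x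

def MatIrreducible {n : ℕ} (P : Matrix (Fin n) (Fin n) ℝ) : Prop :=
  ∀ x y, ∃ k : ℕ, 0 < (P ^ k) x y

noncomputable def pInner {n : ℕ} (π f g : Fin n → ℝ) : ℝ := ∑ x, f x * g x * π x

noncomputable def autocov {n : ℕ} (π : Fin n → ℝ) (P : Matrix (Fin n) (Fin n) ℝ)
    (f : Fin n → ℝ) (k : ℕ) : ℝ :=
  ∑ x, ∑ y, π x * (f x - ∑ z, π z * f z) * (P ^ k) x y * (f y - ∑ z, π z * f z)

noncomputable def varN {n : ℕ} (π : Fin n → ℝ) (P : Matrix (Fin n) (Fin n) ℝ)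
    (f : Fin n → ℝ) (N : ℕ) : ℝ :=
  ((N : ℝ))⁻¹ * ∑ i ∈ Finset.range N, ∑ j ∈ Finset.range N,
    autocov π P f (max i j - min i j)

def HasAsymptVar {n : ℕ} (π : Fin n → ℝ) (P : Matrix (Fin n) (Fin n) ℝ)
    (f : Fin n → ℝ) (v : ℝ) : Prop :=
  Tendsto (varN π P f) atTop (nhds v)

def EffDom {n : ℕ} (π : Fin n → ℝ) (P Q : Matrix (Fin n) (Fin n) ℝ) : Prop :=
  ∀ (f : Fin n → ℝ) (vP vQ : ℝ),
    HasAsymptVar π P f vP → HasAsymptVar π Q f vQ → vP ≤ vQ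

open Finset Topology

/-- The factor `1 + 2 ∑_{k ≥ 1} x ^ k` by which an eigenvalue `x` of the kernel scales the
asymptotic variance of the corresponding eigenfunction. -/
noncomputable def asymptVarFactor (x : ℝ) : ℝ := (1 + x) / (1 - x)

lemma strictMonoOn_asymptVarFactor : StrictMonoOn asymptVarFactor (Set.Iio 1) := by
  intro a ha b hb hab
  rw [Set.mem_Iio] at ha hb
  rw [asymptVarFactor, asymptVarFactor, div_lt_div_iff₀ (by linarith) (by linarith)]
  nlinarith

lemma sum_range_sum_range_pow_dist_succ {R : Type*} [CommSemiring R] (x : R) (N : ℕ) :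
    ∑ i ∈ range (N + 1), ∑ j ∈ range (N + 1), x ^ (max i j - min i j) =
      ∑ i ∈ range N, ∑ j ∈ range N, x ^ (max i j - min i j) +
        2 * ∑ i ∈ range N, x ^ (i + 1) + 1 := by
  have hreflect : ∑ i ∈ range N, x ^ (N - i) = ∑ i ∈ range N, x ^ (i + 1) := by
    rw [← sum_range_reflect]
    refine sum_congr rfl fun i hi => ?_
    rw [mem_range] at hi
    congr 1
    omega
  have hrow : ∑ i ∈ range N, x ^ (max i N - min i N) = ∑ i ∈ range N, x ^ (N - i) :=
    sum_congr rfl fun i hi => by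
      rw [max_eq_right (mem_range.mp hi).le, min_eq_left (mem_range.mp hi).le]
  have hcol : ∑ j ∈ range N, x ^ (max N j - min N j) = ∑ j ∈ range N, x ^ (N - j) :=
    sum_congr rfl fun j hj => by
      rw [max_eq_left (mem_range.mp hj).le, min_eq_right (mem_range.mp hj).le]
  simp only [sum_range_succ, sum_add_distrib, hrow, hcol, hreflect, max_self, min_self,
    Nat.sub_self, pow_zero]
  ring

lemma sum_range_sum_range_pow_dist_mul {R : Type*} [CommRing R] (x : R) (N : ℕ) :
    (∑ i ∈ range N, ∑ j ∈ range N, x ^ (max i j - min i j)) * (1 - x) ^ 2 =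
      N * (1 + x) * (1 - x) - 2 * x * (1 - x ^ N) := by
  induction N with
  | zero => simp
  | succ N ih =>
    have hgeom : (1 - x) * ∑ i ∈ range N, x ^ (i + 1) = x * (1 - x ^ N) := by
      simp only [pow_succ, ← sum_mul, ← mul_neg_geom_sum x N]
      ring
    rw [sum_range_sum_range_pow_dist_succ]
    push_cast
    linear_combination ih + 2 * (1 - x) * hgeom

lemma tendsto_sum_range_sum_range_pow_dist {x : ℝ} (h₁ : -1 ≤ x) (h₂ : x < 1) :
    Tendsto (fun N : ℕ => (N : ℝ)⁻¹ * ∑ i ∈ range N, ∑ j ∈ range N, x ^ (max i j - min i j))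
      atTop (𝓝 (asymptVarFactor x)) := by
  have hx : (1 - x) ≠ 0 := by linarith
  have hbdd : IsBoundedUnder (· ≤ ·) atTop ((‖·‖) ∘ fun N : ℕ => 1 - x ^ N) := by
    refine isBoundedUnder_of ⟨2, fun N => ?_⟩
    have := abs_le.mp ((abs_pow x N).trans_le (pow_le_one₀ (abs_nonneg x) (abs_le.mpr ⟨h₁, h₂.le⟩)))
    rw [Function.comp_apply, Real.norm_eq_abs, abs_le]
    constructor <;> linarith
  have hlim := (tendsto_const_nhds (x := asymptVarFactor x)).sub
    ((tendsto_inv_atTop_nhds_zero_nat.zero_mul_isBoundedUnder_le hbdd).const_mul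
      (2 * x / (1 - x) ^ 2))
  rw [mul_zero, sub_zero] at hlim
  refine hlim.congr' ((eventually_ne_atTop 0).mono fun N hN => ?_)
  have hN : (N : ℝ) ≠ 0 := Nat.cast_ne_zero.mpr hN
  -- the closed form gives `N⁻¹ ∑∑ = (1 + x) / (1 - x) - 2 x / (1 - x)² · N⁻¹ (1 - x ^ N)`
  have hclosed := sum_range_sum_range_pow_dist_mul x N
  rw [asymptVarFactor]
  field_simp
  linear_combination -hclosed

section Stochastic

variable {n : ℕ} {P : Matrix (Fin n) (Fin n) ℝ}

lemma IsStochastic.mulVec_one (hP : IsStochastic P) : P *ᵥ 1 = 1 := by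
  ext x
  simp only [Matrix.mulVec, dotProduct, Pi.one_apply, mul_one, hP.2 x]

lemma IsStochastic.pow (hP : IsStochastic P) (k : ℕ) : IsStochastic (P ^ k) := by
  induction k with
  | zero =>
    refine ⟨fun x y => ?_, fun x => ?_⟩
    · rw [pow_zero, Matrix.one_apply]
      split_ifs <;> norm_num
    · simp [Matrix.one_apply]
  | succ k ih =>
    refine ⟨fun x y => ?_, fun x => ?_⟩
    · rw [pow_succ, Matrix.mul_apply]
      exact sum_nonneg fun z _ => mul_nonneg (ih.1 x z) (hP.1 z y)
    · have h := congrFun ((P ^ k).mulVec_mulVec 1 P) x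
      rw [hP.mulVec_one, ih.mulVec_one, ← pow_succ] at h
      simpa [Matrix.mulVec, dotProduct] using h.symm

lemma IsStochastic.norm_mulVec_le (hP : IsStochastic P) (v : Fin n → ℝ) : ‖P *ᵥ v‖ ≤ ‖v‖ := by
  refine (pi_norm_le_iff_of_nonneg (norm_nonneg v)).mpr fun x => ?_
  calc ‖∑ y, P x y * v y‖ ≤ ∑ y, ‖P x y * v y‖ := norm_sum_le _ _
    _ ≤ ∑ y, P x y * ‖v‖ := sum_le_sum fun y _ => by
        rw [norm_mul, Real.norm_of_nonneg (hP.1 x y)]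
        exact mul_le_mul_of_nonneg_left (norm_le_pi_norm v y) (hP.1 x y)
    _ = ‖v‖ := by rw [← sum_mul, hP.2 x, one_mul]

lemma IsStochastic.abs_le_one (hP : IsStochastic P) {v : Fin n → ℝ} {l : ℝ}
    (h : P *ᵥ v = l • v) (hv : v ≠ 0) : |l| ≤ 1 := by
  have := hP.norm_mulVec_le v
  rw [h, norm_smul, Real.norm_eq_abs] at this
  exact (mul_le_iff_le_one_left (norm_pos_iff.mpr hv)).mp this

lemma mulVec_pow_eq_pow_smul {v : Fin n → ℝ} {l : ℝ} (h : P *ᵥ v = l • v) (k : ℕ) :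
    (P ^ k) *ᵥ v = l ^ k • v := by
  induction k with
  | zero => simp
  | succ k ih =>
    rw [pow_succ, ← Matrix.mulVec_mulVec, h, Matrix.mulVec_smul, ih, smul_smul, pow_succ']

/-- Maximum principle: along a path of positive probability from a maximiser of `v`, averaging
cannot decrease `v`, so irreducibility spreads the maximum everywhere. -/
lemma IsStochastic.apply_eq_of_mulVec_eq_self (hP : IsStochastic P) (hirr : MatIrreducible P)
    {v : Fin n → ℝ} (h : P *ᵥ v = v) (x y : Fin n) : v x = v y := by
  obtain ⟨x₀, -, hmax⟩ := exists_max_image univ v ⟨x, mem_univ x⟩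
  suffices key : ∀ z, v z = v x₀ by rw [key x, key y]
  intro z
  obtain ⟨k, hk⟩ := hirr x₀ z
  have hPk := hP.pow k
  have hfix : (P ^ k) *ᵥ v = v := by
    simpa using mulVec_pow_eq_pow_smul (l := 1) (by rw [h, one_smul]) k
  have hsum : ∑ y, (P ^ k) x₀ y * (v x₀ - v y) = 0 := by
    have hx₀ : ∑ y, (P ^ k) x₀ y * v y = v x₀ := congrFun hfix x₀
    simp only [mul_sub, sum_sub_distrib, ← sum_mul, hPk.2 x₀, one_mul, hx₀, sub_self]
  have hterm := (sum_eq_zero_iff_of_nonneg fun y _ =>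
    mul_nonneg (hPk.1 x₀ y) (sub_nonneg.mpr (hmax y (mem_univ y)))).mp hsum z (mem_univ z)
  linarith [(mul_eq_zero.mp hterm).resolve_left hk.ne']

end Stochastic

section PInner

variable {n : ℕ} {π : Fin n → ℝ}

lemma pInner_smul_right (c : ℝ) (f g : Fin n → ℝ) : pInner π f (c • g) = c * pInner π f g := by
  simp only [pInner, mul_sum, Pi.smul_apply, smul_eq_mul]
  exact sum_congr rfl fun x _ => by ring

lemma pInner_of_forall_eq {w : Fin n → ℝ} (hw : ∀ x y, w x = w y) (f : Fin n → ℝ) (x₀ : Fin n) :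
    pInner π f w = w x₀ * ∑ z, π z * f z := by
  simp only [pInner, mul_sum]
  exact sum_congr rfl fun x _ => by rw [hw x x₀]; ring

lemma IsReversible.pInner_mulVec {P : Matrix (Fin n) (Fin n) ℝ} (hrev : IsReversible π P)
    (f g : Fin n → ℝ) : pInner π (P *ᵥ f) g = pInner π f (P *ᵥ g) := by
  simp only [pInner, Matrix.mulVec, dotProduct, sum_mul, mul_sum]
  rw [sum_comm]
  refine sum_congr rfl fun x _ => sum_congr rfl fun y _ => ?_
  linear_combination f x * g y * hrev y x

lemma IsReversible.pInner_pow_mulVec {P : Matrix (Fin n) (Fin n) ℝ} (hrev : IsReversible π P)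
    (k : ℕ) (f g : Fin n → ℝ) : pInner π ((P ^ k) *ᵥ f) g = pInner π f ((P ^ k) *ᵥ g) := by
  induction k generalizing g with
  | zero => simp
  | succ k ih =>
    rw [pow_succ', ← Matrix.mulVec_mulVec, hrev.pInner_mulVec, ih, Matrix.mulVec_mulVec, ← pow_succ,
      pow_succ']

/-- `n` vectors orthonormal for `pInner π`, i.e. an orthonormal basis of `L²(π)`. -/
def POrthonormal (π : Fin n → ℝ) (v : Fin n → Fin n → ℝ) : Prop :=
  ∀ i j, pInner π (v i) (v j) = if i = j then 1 else 0

namespace POrthonormal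

variable {v : Fin n → Fin n → ℝ} (hv : POrthonormal π v)
include hv

/-- Orthonormality says that `diag π * vᵀ` is a right inverse of `v`; it is then a left inverse. -/
lemma mul_sum_mul (x y : Fin n) : π x * ∑ m, v m x * v m y = if x = y then 1 else 0 := by
  have hright : Matrix.of v * Matrix.of (fun x m => π x * v m x) = 1 := by
    ext i j
    rw [Matrix.mul_apply, Matrix.one_apply, ← hv i j, pInner]
    exact sum_congr rfl fun x _ => by simp only [Matrix.of_apply]; ring
  have hleft : (Matrix.of (fun x m => π x * v m x) * Matrix.of v) x y = (1 : Matrix _ _ ℝ) x y := by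
    rw [mul_eq_one_comm.mp hright]
  rw [Matrix.mul_apply, Matrix.one_apply] at hleft
  rw [← hleft, mul_sum]
  exact sum_congr rfl fun m _ => by simp only [Matrix.of_apply]; ring

lemma sum_pInner_mul (f : Fin n → ℝ) (x : Fin n) : ∑ m, pInner π f (v m) * v m x = f x := by
  calc ∑ m, pInner π f (v m) * v m x = ∑ y, f y * (π y * ∑ m, v m y * v m x) := by
        simp only [pInner, sum_mul, mul_sum]
        rw [sum_comm]
        exact sum_congr rfl fun y _ => sum_congr rfl fun m _ => by ring
    _ = f x := by simp [hv.mul_sum_mul]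

lemma pInner_eq_sum (f g : Fin n → ℝ) :
    pInner π f g = ∑ m, pInner π f (v m) * pInner π g (v m) := by
  calc pInner π f g = ∑ x, f x * (∑ m, pInner π g (v m) * v m x) * π x := by
        simp only [hv.sum_pInner_mul g]; rfl
    _ = ∑ m, (∑ x, f x * v m x * π x) * pInner π g (v m) := by
        simp only [mul_sum, sum_mul]
        rw [sum_comm]
        exact sum_congr rfl fun _ _ => sum_congr rfl fun _ _ => by ring
    _ = _ := rfl

lemma ne_zero (m : Fin n) : v m ≠ 0 := by
  intro h
  simpa [h, pInner] using hv m m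

lemma exists_pInner_ne_zero {f : Fin n → ℝ} (hf : f ≠ 0) : ∃ m, pInner π f (v m) ≠ 0 := by
  by_contra! h
  exact hf (funext fun x => by simp [← hv.sum_pInner_mul f x, h])

lemma pInner_self_pos {f : Fin n → ℝ} (hf : f ≠ 0) : 0 < pInner π f f := by
  obtain ⟨m, hm⟩ := hv.exists_pInner_ne_zero hf
  rw [hv.pInner_eq_sum]
  exact sum_pos' (fun k _ => mul_self_nonneg _) ⟨m, mem_univ m, mul_self_pos.mpr hm⟩

lemma mul_pInner_self_le_sum {f : Fin n → ℝ} {w : Fin n → ℝ} {c : ℝ}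
    (h : ∀ m, pInner π f (v m) ≠ 0 → c ≤ w m) :
    c * pInner π f f ≤ ∑ m, pInner π f (v m) ^ 2 * w m := by
  rw [hv.pInner_eq_sum, mul_sum]
  refine sum_le_sum fun m _ => ?_
  by_cases hm : pInner π f (v m) = 0
  · simp [hm]
  · nlinarith [h m hm, sq_nonneg (pInner π f (v m))]

lemma sum_le_mul_pInner_self {f : Fin n → ℝ} {w : Fin n → ℝ} {c : ℝ}
    (h : ∀ m, pInner π f (v m) ≠ 0 → w m ≤ c) :
    ∑ m, pInner π f (v m) ^ 2 * w m ≤ c * pInner π f f := by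
  rw [hv.pInner_eq_sum, mul_sum]
  refine sum_le_sum fun m _ => ?_
  by_cases hm : pInner π f (v m) = 0
  · simp [hm]
  · nlinarith [h m hm, sq_nonneg (pInner π f (v m))]

end POrthonormal

lemma exists_ne_zero_forall_pInner_eq_zero {ι : Type*} [Fintype ι] (hι : Fintype.card ι < n)
    (w : ι → Fin n → ℝ) : ∃ f ≠ 0, ∀ k, pInner π f (w k) = 0 := by
  let A : Matrix ι (Fin n) ℝ := Matrix.of fun k x => w k x * π x
  have hker : LinearMap.ker A.mulVecLin ≠ ⊥ :=
    LinearMap.ker_ne_bot_of_finrank_lt (by simpa using hι)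
  obtain ⟨f, hf, hf0⟩ := (Submodule.ne_bot_iff _).mp hker
  refine ⟨f, hf0, fun k => ?_⟩
  have := congrFun (LinearMap.mem_ker.mp hf) k
  simp only [Matrix.mulVecLin_apply, Matrix.mulVec, dotProduct, A, Matrix.of_apply,
    Pi.zero_apply] at this
  rw [pInner, ← this]
  exact sum_congr rfl fun x _ => by ring

/-- The dimension count behind the Courant–Fischer min-max principle. -/
lemma exists_ne_zero_pInner_eq_zero_of_lt_of_gt (u v : Fin n → Fin n → ℝ) (i : Fin n) :
    ∃ f ≠ 0, (∀ m < i, pInner π f (u m) = 0) ∧ ∀ m, i < m → pInner π f (v m) = 0 := by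
  have hcard : Fintype.card {m // m ≠ i} < n := by
    rw [Fintype.card_subtype_compl, Fintype.card_fin, Fintype.card_unique]
    exact Nat.sub_lt i.pos one_pos
  obtain ⟨f, hf, hperp⟩ := exists_ne_zero_forall_pInner_eq_zero (π := π) hcard
    fun m => if (m : Fin n) < i then u m else v m
  refine ⟨f, hf, fun m hm => ?_, fun m hm => ?_⟩
  · simpa [hm] using hperp ⟨m, hm.ne⟩
  · simpa [hm.not_gt] using hperp ⟨m, hm.ne'⟩

end PInner

section AsymptoticVariance

variable {n : ℕ} {π : Fin n → ℝ} {P : Matrix (Fin n) (Fin n) ℝ} {v : Fin n → Fin n → ℝ}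
  {lam : Fin n → ℝ}

noncomputable def centered (π f : Fin n → ℝ) : Fin n → ℝ := fun x => f x - ∑ z, π z * f z

lemma sum_mul_centered (hπsum : ∑ x, π x = 1) (f : Fin n → ℝ) :
    ∑ x, π x * centered π f x = 0 := by
  simp only [centered, mul_sub, sum_sub_distrib, ← sum_mul, hπsum, one_mul, sub_self]

lemma centered_eq_self {f : Fin n → ℝ} (hf : ∑ z, π z * f z = 0) : centered π f = f := by
  ext x
  rw [centered, hf, sub_zero]

lemma autocov_eq_pInner (f : Fin n → ℝ) (k : ℕ) :
    autocov π P f k = pInner π (centered π f) ((P ^ k) *ᵥ centered π f) := by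
  simp only [autocov, pInner, centered, Matrix.mulVec, dotProduct, mul_sum, sum_mul]
  exact sum_congr rfl fun x _ => sum_congr rfl fun y _ => by ring

lemma pInner_eq_zero_of_mulVec_eq_self (hP : IsStochastic P) (hirr : MatIrreducible P)
    {w f : Fin n → ℝ} (hw : P *ᵥ w = w) (hf : ∑ z, π z * f z = 0) : pInner π f w = 0 := by
  rcases isEmpty_or_nonempty (Fin n) with hn | ⟨⟨x₀⟩⟩
  · simp [pInner]
  · rw [pInner_of_forall_eq (hP.apply_eq_of_mulVec_eq_self hirr hw) f x₀, hf, mul_zero]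

lemma sum_mul_eq_zero_of_pInner_eq_zero (hP : IsStochastic P) (hirr : MatIrreducible P)
    {w f : Fin n → ℝ} (hw : P *ᵥ w = w) (hw₀ : w ≠ 0) (hf : pInner π f w = 0) :
    ∑ z, π z * f z = 0 := by
  obtain ⟨x₀, hx₀⟩ := Function.ne_iff.mp hw₀
  rw [pInner_of_forall_eq (hP.apply_eq_of_mulVec_eq_self hirr hw) f x₀] at hf
  exact (mul_eq_zero.mp hf).resolve_left hx₀

lemma eigenvalue_lt_one_of_pInner_ne_zero (hP : IsStochastic P) (hirr : MatIrreducible P)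
    (hv : POrthonormal π v) (heig : ∀ m, P *ᵥ v m = lam m • v m) {f : Fin n → ℝ}
    (hf : ∑ z, π z * f z = 0) {m : Fin n} (hm : pInner π f (v m) ≠ 0) : lam m < 1 := by
  refine lt_of_le_of_ne (abs_le.mp (hP.abs_le_one (heig m) (hv.ne_zero m))).2 fun h => hm ?_
  exact pInner_eq_zero_of_mulVec_eq_self hP hirr (by rw [heig m, h, one_smul]) hf

lemma autocov_eq_sum (hrev : IsReversible π P) (hv : POrthonormal π v)
    (heig : ∀ m, P *ᵥ v m = lam m • v m) (f : Fin n → ℝ) (k : ℕ) :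
    autocov π P f k = ∑ m, pInner π (centered π f) (v m) ^ 2 * lam m ^ k := by
  rw [autocov_eq_pInner, hv.pInner_eq_sum]
  refine sum_congr rfl fun m _ => ?_
  rw [hrev.pInner_pow_mulVec, mulVec_pow_eq_pow_smul (heig m), pInner_smul_right]
  ring

lemma hasAsymptVar_eq_sum (hP : IsStochastic P) (hirr : MatIrreducible P)
    (hrev : IsReversible π P) (hπsum : ∑ x, π x = 1) (hv : POrthonormal π v)
    (heig : ∀ m, P *ᵥ v m = lam m • v m) (f : Fin n → ℝ) :
    HasAsymptVar π P f (∑ m, pInner π (centered π f) (v m) ^ 2 * asymptVarFactor (lam m)) := by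
  have hvarN : varN π P f = fun N : ℕ => ∑ m, pInner π (centered π f) (v m) ^ 2 *
      ((N : ℝ)⁻¹ * ∑ i ∈ range N, ∑ j ∈ range N, lam m ^ (max i j - min i j)) := by
    ext N
    simp only [varN, autocov_eq_sum hrev hv heig, mul_sum]
    rw [sum_congr rfl fun i _ => sum_comm, sum_comm]
    exact sum_congr rfl fun m _ => sum_congr rfl fun i _ => sum_congr rfl fun j _ => by ring
  rw [HasAsymptVar, hvarN]
  refine tendsto_finsetSum _ fun m _ => ?_
  by_cases hm : pInner π (centered π f) (v m) = 0
  · simp [hm]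
  · have hlt := eigenvalue_lt_one_of_pInner_ne_zero hP hirr hv heig (sum_mul_centered hπsum f) hm
    have hge := (abs_le.mp (hP.abs_le_one (heig m) (hv.ne_zero m))).1
    exact (tendsto_sum_range_sum_range_pow_dist hge hlt).const_mul _

end AsymptoticVariance

section Eigenvalues

variable {n : ℕ} {π : Fin n → ℝ} {P : Matrix (Fin n) (Fin n) ℝ} {v : Fin n → Fin n → ℝ}
  {lam : Fin n → ℝ} [NeZero n]

lemma exists_eigenvalue_eq_one (hP : IsStochastic P) (hrev : IsReversible π P)
    (hv : POrthonormal π v) (heig : ∀ m, P *ᵥ v m = lam m • v m) : ∃ m, lam m = 1 := by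
  obtain ⟨m, hm⟩ := hv.exists_pInner_ne_zero (f := 1) (Function.ne_iff.mpr ⟨0, one_ne_zero⟩)
  refine ⟨m, mul_left_cancel₀ hm ?_⟩
  calc pInner π 1 (v m) * lam m = pInner π 1 (P *ᵥ v m) := by rw [heig, pInner_smul_right, mul_comm]
    _ = pInner π 1 (v m) * 1 := by rw [← hrev.pInner_mulVec, hP.mulVec_one, mul_one]

lemma eigenvalue_zero_eq_one (hP : IsStochastic P) (hrev : IsReversible π P)
    (hv : POrthonormal π v) (heig : ∀ m, P *ᵥ v m = lam m • v m) (hanti : Antitone lam) :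
    lam 0 = 1 := by
  obtain ⟨m, hm⟩ := exists_eigenvalue_eq_one hP hrev hv heig
  exact le_antisymm (abs_le.mp (hP.abs_le_one (heig 0) (hv.ne_zero 0))).2
    (hm ▸ hanti (Fin.zero_le m))

end Eigenvalues

section Rayleigh

variable {n : ℕ} {π : Fin n → ℝ} {P : Matrix (Fin n) (Fin n) ℝ} {v : Fin n → Fin n → ℝ}
  {lam : Fin n → ℝ} {f : Fin n → ℝ} {i : Fin n}

lemma eigenvalue_lt_one_of_pInner_eq_zero_of_gt (hP : IsStochastic P) (hirr : MatIrreducible P)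
    (hv : POrthonormal π v) (heig : ∀ m, P *ᵥ v m = lam m • v m) (hanti : Antitone lam)
    (hf₀ : f ≠ 0) (hf : ∑ z, π z * f z = 0) (hperp : ∀ m, i < m → pInner π f (v m) = 0) :
    lam i < 1 := by
  obtain ⟨m, hm⟩ := hv.exists_pInner_ne_zero hf₀
  exact (hanti (not_lt.mp fun h => hm (hperp m h))).trans_lt
    (eigenvalue_lt_one_of_pInner_ne_zero hP hirr hv heig hf hm)

lemma asymptVarFactor_mul_pInner_self_le (hP : IsStochastic P) (hirr : MatIrreducible P)
    (hv : POrthonormal π v) (heig : ∀ m, P *ᵥ v m = lam m • v m) (hanti : Antitone lam)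
    (hf : ∑ z, π z * f z = 0) (hperp : ∀ m, i < m → pInner π f (v m) = 0) :
    asymptVarFactor (lam i) * pInner π f f ≤
      ∑ m, pInner π f (v m) ^ 2 * asymptVarFactor (lam m) := by
  refine hv.mul_pInner_self_le_sum fun m hm => ?_
  have hle : lam i ≤ lam m := hanti (not_lt.mp fun h => hm (hperp m h))
  have hlt : lam m < 1 := eigenvalue_lt_one_of_pInner_ne_zero hP hirr hv heig hf hm
  exact strictMonoOn_asymptVarFactor.monotoneOn (hle.trans_lt hlt) hlt hle

lemma sum_le_asymptVarFactor_mul_pInner_self (hv : POrthonormal π v) (hanti : Antitone lam)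
    (hi : lam i < 1) (hperp : ∀ m < i, pInner π f (v m) = 0) :
    ∑ m, pInner π f (v m) ^ 2 * asymptVarFactor (lam m) ≤
      asymptVarFactor (lam i) * pInner π f f := by
  refine hv.sum_le_mul_pInner_self fun m hm => ?_
  have hle : lam m ≤ lam i := hanti (not_lt.mp fun h => hm (hperp m h))
  exact strictMonoOn_asymptVarFactor.monotoneOn (hle.trans_lt hi) hi hle

end Rayleigh

theorem stmt11_general {n : ℕ} (π : Fin n → ℝ) (P Q : Matrix (Fin n) (Fin n) ℝ)
    (hπsum : ∑ x, π x = 1)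
    (hP : IsStochastic P) (hQ : IsStochastic Q)
    (hirrP : MatIrreducible P) (hirrQ : MatIrreducible Q)
    (hrevP : IsReversible π P) (hrevQ : IsReversible π Q)
    (vP vQ : Fin n → Fin n → ℝ) (lam beta : Fin n → ℝ)
    (horthoP : ∀ i j, pInner π (vP i) (vP j) = if i = j then 1 else 0)
    (horthoQ : ∀ i j, pInner π (vQ i) (vQ j) = if i = j then 1 else 0)
    (heigP : ∀ i, P.mulVec (vP i) = lam i • vP i)
    (heigQ : ∀ i, Q.mulVec (vQ i) = beta i • vQ i)
    (hlam : Antitone lam) (hbeta : Antitone beta)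
    (hdom : EffDom π P Q) :
    ∀ i, lam i ≤ beta i := by
  intro i
  have : NeZero n := ⟨i.pos.ne'⟩
  have hvP : POrthonormal π vP := horthoP
  have hvQ : POrthonormal π vQ := horthoQ
  have hβ₀ : beta 0 = 1 := eigenvalue_zero_eq_one hQ hrevQ hvQ heigQ hbeta
  rcases eq_or_ne i 0 with rfl | hi
  · exact hβ₀ ▸ (abs_le.mp (hP.abs_le_one (heigP 0) (hvP.ne_zero 0))).2
  by_contra! hlt
  obtain ⟨f, hf₀, hfQ, hfP⟩ := exists_ne_zero_pInner_eq_zero_of_lt_of_gt (π := π) vQ vP i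
  -- `vQ 0` is constant, so `f ⊥ vQ 0` says that `f` is centred
  have hf : ∑ z, π z * f z = 0 := sum_mul_eq_zero_of_pInner_eq_zero hQ hirrQ
    (by rw [heigQ, hβ₀, one_smul]) (hvQ.ne_zero 0) (hfQ 0 ((Fin.pos_iff_ne_zero' i).mpr hi))
  have hvar := hdom f _ _ (hasAsymptVar_eq_sum hP hirrP hrevP hπsum hvP heigP f)
    (hasAsymptVar_eq_sum hQ hirrQ hrevQ hπsum hvQ heigQ f)
  rw [centered_eq_self hf] at hvar
  have hlam_lt := eigenvalue_lt_one_of_pInner_eq_zero_of_gt hP hirrP hvP heigP hlam hf₀ hf hfP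
  have hfactor := le_of_mul_le_mul_right
    ((asymptVarFactor_mul_pInner_self_le hP hirrP hvP heigP hlam hf hfP).trans <| hvar.trans <|
      sum_le_asymptVarFactor_mul_pInner_self hvQ hbeta (hlt.trans hlam_lt) hfQ)
    (hvP.pInner_self_pos hf₀)
  exact hlt.not_ge ((strictMonoOn_asymptVarFactor.le_iff_le hlam_lt (hlt.trans hlam_lt)).mp hfactor)

theorem stmt11 {n : ℕ} (π : Fin n → ℝ) (P Q : Matrix (Fin n) (Fin n) ℝ)
    (hπpos : ∀ x, 0 < π x) (hπsum : ∑ x, π x = 1)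
    (hP : IsStochastic P) (hQ : IsStochastic Q)
    (hirrP : MatIrreducible P) (hirrQ : MatIrreducible Q)
    (hrevP : IsReversible π P) (hrevQ : IsReversible π Q)
    (vP vQ : Fin n → Fin n → ℝ) (lam beta : Fin n → ℝ)
    (horthoP : ∀ i j, pInner π (vP i) (vP j) = if i = j then 1 else 0)
    (horthoQ : ∀ i j, pInner π (vQ i) (vQ j) = if i = j then 1 else 0)
    (heigP : ∀ i, P.mulVec (vP i) = lam i • vP i)
    (heigQ : ∀ i, Q.mulVec (vQ i) = beta i • vQ i)
    (hlam : Antitone lam) (hbeta : Antitone beta)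
    (hdom : EffDom π P Q) :
    ∀ i, lam i ≤ beta i :=
  stmt11_general π P Q hπsum hP hQ hirrP hirrQ hrevP hrevQ vP vQ lam beta horthoP horthoQ heigP
    heigQ hlam hbeta hdom
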